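/- Let S be a p×p Hermitian positive semidefinite complex matrix, z a complex number with Im z > 0, and x a p-dimensional complex vector. Then the imaginary part of z·x*(S − zI)⁻¹x is nonnegative, and consequently |1/(1 + x*(S − zI)⁻¹x)| ≤ |z| / Im z. -/

import Mathlib

open Matrix
open scoped ComplexOrder ComplexConjugate

/-!
Writing `x = (S - z) w`, the quadratic form `x* (S - z)⁻¹ x = w* (S - z)* w` equals
`w* S w - z̄ ‖w‖²`. Multiplying by `z` turns the second term into the real number `|z|² ‖w‖²`,
so `Im (z x* (S - z)⁻¹ x) = Im z · w* S w ≥ 0`. Hence `Im (z (1 + x* (S - z)⁻¹ x)) ≥ Im z`,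
and `Im z ≤ |z| |1 + x* (S - z)⁻¹ x|` is the claimed bound.
-/

namespace Matrix

variable {n : Type*} [Fintype n] [DecidableEq n] {S : Matrix n n ℂ}

theorem IsHermitian.star_sub_smul_one_mulVec_dotProduct (hS : S.IsHermitian) (z : ℂ)
    (w : n → ℂ) :
    star ((S - z • 1) *ᵥ w) ⬝ᵥ w = star w ⬝ᵥ (S *ᵥ w) - conj z * (star w ⬝ᵥ w) := by
  rw [star_mulVec, ← dotProduct_mulVec, conjTranspose_sub, hS.eq, conjTranspose_smul,
    conjTranspose_one, sub_mulVec, smul_mulVec, one_mulVec, dotProduct_sub, dotProduct_smul,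
    smul_eq_mul, Complex.star_def]

theorem IsHermitian.isUnit_det_sub_smul_one (hS : S.IsHermitian) {z : ℂ} (hz : z.im ≠ 0) :
    IsUnit (S - z • 1).det := by
  rw [isUnit_iff_ne_zero]
  intro hdet
  obtain ⟨v, hv, hSv⟩ := exists_mulVec_eq_zero_iff.2 hdet
  obtain ⟨hnorm_re, hnorm_im⟩ := Complex.pos_iff.1 (dotProduct_star_self_pos_iff.2 hv)
  have hSv_im : (star v ⬝ᵥ S *ᵥ v).im = 0 := hS.im_star_dotProduct_mulVec_self v
  have him := congrArg Complex.im (hS.star_sub_smul_one_mulVec_dotProduct z v)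
  rw [hSv, star_zero, zero_dotProduct, Complex.sub_im, hSv_im,
    Complex.mul_im, ← hnorm_im, Complex.conj_im] at him
  have : z.im * (star v ⬝ᵥ v).re = 0 := by simpa using him
  exact hz (by simpa [hnorm_re.ne'] using this)

theorem PosSemidef.exists_star_dotProduct_inv_sub_smul_one_mulVec_eq (hS : S.PosSemidef)
    {z : ℂ} (hz : z.im ≠ 0) (x : n → ℂ) :
    ∃ s t : ℝ, 0 ≤ s ∧ star x ⬝ᵥ ((S - z • 1)⁻¹ *ᵥ x) = s - conj z * t := by
  have hdet := hS.1.isUnit_det_sub_smul_one hz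
  obtain ⟨w, rfl⟩ : ∃ w, (S - z • 1) *ᵥ w = x :=
    ⟨(S - z • 1)⁻¹ *ᵥ x, by rw [mulVec_mulVec, mul_nonsing_inv _ hdet, one_mulVec]⟩
  obtain ⟨s, hs, hs_eq⟩ := RCLike.nonneg_iff_exists_ofReal.1 (hS.dotProduct_mulVec_nonneg w)
  obtain ⟨t, -, ht_eq⟩ := RCLike.nonneg_iff_exists_ofReal.1 (dotProduct_star_self_nonneg w)
  refine ⟨s, t, hs, ?_⟩
  rw [mulVec_mulVec, nonsing_inv_mul _ hdet, one_mulVec,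
    hS.1.star_sub_smul_one_mulVec_dotProduct, ← hs_eq, ← ht_eq]
  rfl

end Matrix

namespace Complex

theorem im_mul_ofReal_sub_conj_mul_ofReal (z : ℂ) (s t : ℝ) :
    (z * (s - conj z * t)).im = z.im * s := by
  rw [mul_sub, ← mul_assoc, mul_conj', sub_im]
  norm_cast
  simp

theorem norm_one_div_le_of_im_le_im_mul {z u : ℂ} (hz : 0 < z.im) (h : z.im ≤ (z * u).im) :
    ‖1 / u‖ ≤ ‖z‖ / z.im := by
  have hzu : z.im ≤ ‖z‖ * ‖u‖ := h.trans ((im_le_norm _).trans_eq (norm_mul z u))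
  have hu : 0 < ‖u‖ := pos_of_mul_pos_right (hz.trans_le hzu) (norm_nonneg z)
  rw [norm_div, norm_one, div_le_div_iff₀ hu hz, one_mul]
  exact hzu

end Complex

/-- Bound on `β_k = (1 + x* Q(z) x)⁻¹` from Lemma "bd" of the paper. -/
theorem beta_k_bound {p : ℕ} (S : Matrix (Fin p) (Fin p) ℂ)
    (hS : S.PosSemidef) (z : ℂ) (hz : 0 < z.im) (x : Fin p → ℂ) :
    0 ≤ (z * (star x ⬝ᵥ ((S - z • 1)⁻¹ *ᵥ x))).im ∧
      ‖1 / (1 + star x ⬝ᵥ ((S - z • 1)⁻¹ *ᵥ x))‖ ≤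
        ‖z‖ / z.im := by
  obtain ⟨s, t, hs, hq⟩ := hS.exists_star_dotProduct_inv_sub_smul_one_mulVec_eq hz.ne' x
  have him : (z * (star x ⬝ᵥ ((S - z • 1)⁻¹ *ᵥ x))).im = z.im * s := by
    rw [hq, Complex.im_mul_ofReal_sub_conj_mul_ofReal]
  refine ⟨him ▸ mul_nonneg hz.le hs, Complex.norm_one_div_le_of_im_le_im_mul hz ?_⟩
  rw [mul_add, mul_one, Complex.add_im, him]
  exact le_add_of_nonneg_right (mul_nonneg hz.le hs)
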